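/- Let g ∈ GL(d,ℝ), let {v_n} be a sequence of unit vectors converging to a unit vector v, and suppose g_n ∈ GL(d,ℝ) have singular value decompositions g_n = L_n Δ_n R_n with a₂(g_n)/a₁(g_n) → 0 and R_n → R_∞ (in operator norm). Then ‖g_n v_n‖/‖g_n‖ → |⟨v, R_∞* e₁⟩|. -/

import Mathlib

/-!
Put `wₙ = Rₙ vₙ`. Since `Lₙ` is orthogonal, `‖gₙ vₙ‖ = ‖Δₙ wₙ‖` and `‖gₙ‖ = a₁(gₙ)`. Splitting
`Δₙ` into its first diagonal entry and the rest, the reverse triangle inequality gives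
`|‖gₙ vₙ‖ / ‖gₙ‖ - |⟨wₙ, e₁⟩|| ≤ a₂(gₙ) / a₁(gₙ) → 0`, while
`⟨wₙ, e₁⟩ → ⟨R_∞ v, e₁⟩ = ⟨v, R_∞* e₁⟩`.
-/

open scoped RealInnerProductSpace
open Filter

noncomputable section

/-- Euclidean space `ℝ^d`. -/
abbrev E (d : ℕ) := EuclideanSpace ℝ (Fin d)

/-- The operator norm of a `d × d` real matrix, acting on Euclidean space. -/
def opNorm {d : ℕ} (g : Matrix (Fin d) (Fin d) ℝ) : ℝ :=
  ‖(Matrix.toEuclideanLin g).toContinuousLinearMap‖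

/-- The action of a matrix on a Euclidean vector. -/
def act {d : ℕ} (g : Matrix (Fin d) (Fin d) ℝ) (v : E d) : E d :=
  Matrix.toEuclideanLin g v

/-- The norm of `v ∧ w` in `Λ² ℝ^d`. -/
def wedgeNorm {d : ℕ} (v w : E d) : ℝ :=
  Real.sqrt (‖v‖ ^ 2 * ‖w‖ ^ 2 - ⟪v, w⟫ ^ 2)

/-- The gap distance `d(v̄, w̄) = ‖v ∧ w‖ / (‖v‖ ‖w‖)` on projective space. -/
def gapDist {d : ℕ} (v w : E d) : ℝ := wedgeNorm v w / (‖v‖ * ‖w‖)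

/-- The operator norm of `Λ² g`, computed on the decomposable generators coming from
orthonormal pairs. -/
def lam2Norm {d : ℕ} (g : Matrix (Fin d) (Fin d) ℝ) : ℝ :=
  sSup {r | ∃ v w : E d, ‖v‖ = 1 ∧ ‖w‖ = 1 ∧ ⟪v, w⟫ = 0 ∧
    r = wedgeNorm (act g v) (act g w)}

/-- Spectral radius: the maximal absolute value of the complex eigenvalues. -/
def specRad {d : ℕ} (g : Matrix (Fin d) (Fin d) ℝ) : ℝ :=
  sSup ((fun z : ℂ => ‖z‖) '' spectrum ℂ (g.map (algebraMap ℝ ℂ)))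

/-- Singular value decomposition data: `g = L Δ R` with `L, R` orthogonal and
`Δ = diagonal a`, the `a i` positive and in decreasing order (so `a i = a_{i+1}(g)`). -/
structure SVD {d : ℕ} (g : Matrix (Fin d) (Fin d) ℝ) (L : Matrix (Fin d) (Fin d) ℝ)
    (a : Fin d → ℝ) (R : Matrix (Fin d) (Fin d) ℝ) : Prop where
  orthL : L * L.transpose = 1
  orthR : R * R.transpose = 1
  anti : Antitone a
  pos : ∀ i, 0 < a i
  eq : g = L * Matrix.diagonal a * R

/-- The `i`-th standard basis vector of `ℝ^d`. -/
def stdVec {d : ℕ} (i : Fin d) : E d := EuclideanSpace.single i 1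

section

open Matrix
open scoped Matrix.Norms.L2Operator

variable {d : ℕ}

lemma act_eq_toEuclideanCLM (g : Matrix (Fin d) (Fin d) ℝ) (x : E d) :
    act g x = toEuclideanCLM (𝕜 := ℝ) g x := rfl

lemma opNorm_eq_norm (g : Matrix (Fin d) (Fin d) ℝ) : opNorm g = ‖g‖ := rfl

lemma act_mul (A B : Matrix (Fin d) (Fin d) ℝ) (x : E d) :
    act (A * B) x = act A (act B x) := by
  rw [act_eq_toEuclideanCLM, map_mul]
  rfl

lemma inner_act_transpose_stdVec (A : Matrix (Fin d) (Fin d) ℝ) (x : E d) (i : Fin d) :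
    ⟪x, act Aᵀ (stdVec i)⟫ = act A x i := by
  simp [act_eq_toEuclideanCLM, inner_toEuclideanCLM, stdVec, dotProduct, mulVec, mul_comm]

lemma mem_unitary_of_mul_transpose_eq_one {U : Matrix (Fin d) (Fin d) ℝ} (h : U * Uᵀ = 1) :
    U ∈ unitary (Matrix (Fin d) (Fin d) ℝ) :=
  mem_unitaryGroup_iff.2 <| by
    rwa [star_eq_conjTranspose, conjTranspose_eq_transpose_of_trivial]

lemma norm_act_of_mul_transpose_eq_one {U : Matrix (Fin d) (Fin d) ℝ} (h : U * Uᵀ = 1)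
    (x : E d) : ‖act U x‖ = ‖x‖ :=
  ContinuousLinearMap.norm_map_of_mem_unitary
    (Unitary.map_mem (toEuclideanCLM (𝕜 := ℝ) (n := Fin d))
      (mem_unitary_of_mul_transpose_eq_one h)) x

lemma pi_norm_eq_of_forall_le {ι : Type*} [Fintype ι] {a : ι → ℝ} {i : ι}
    (h0 : ∀ j, 0 ≤ a j) (hi : ∀ j, a j ≤ a i) : ‖a‖ = a i := by
  refine le_antisymm ((pi_norm_le_iff_of_nonneg (h0 i)).2 fun j => ?_) ?_
  · simpa [abs_of_nonneg (h0 j)] using hi j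
  · simpa [abs_of_nonneg (h0 i)] using norm_le_pi_norm a i

lemma abs_norm_act_diagonal_sub_le {a : Fin d → ℝ} {i : Fin d} {c : ℝ} (hc : 0 ≤ c)
    (ha : ∀ j ≠ i, |a j| ≤ c) (x : E d) :
    |‖act (diagonal a) x‖ - (|a i| * |x i|)| ≤ c * ‖x‖ := by
  have hsplit : act (diagonal a) x =
      EuclideanSpace.single i (a i * x i) + act (diagonal (Function.update a i 0)) x := by
    ext j
    by_cases hj : j = i <;> simp [act_eq_toEuclideanCLM, mulVec_diagonal, hj]
  have hrest : ‖diagonal (Function.update a i 0)‖ ≤ c := by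
    rw [l2_opNorm_diagonal, pi_norm_le_iff_of_nonneg hc]
    intro j
    by_cases hj : j = i
    · simp [hj, hc]
    · simpa [hj] using ha j hj
  calc |‖act (diagonal a) x‖ - (|a i| * |x i|)|
      = |‖act (diagonal a) x‖ - ‖EuclideanSpace.single i (a i * x i)‖| := by simp
    _ ≤ ‖act (diagonal a) x - EuclideanSpace.single i (a i * x i)‖ := abs_norm_sub_norm_le _ _
    _ = ‖act (diagonal (Function.update a i 0)) x‖ := by rw [hsplit, add_sub_cancel_left]
    _ ≤ ‖diagonal (Function.update a i 0)‖ * ‖x‖ := (toEuclideanCLM (𝕜 := ℝ) _).le_opNorm x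
    _ ≤ c * ‖x‖ := by gcongr

lemma tendsto_act {α : Type*} {l : Filter α} {A : α → Matrix (Fin d) (Fin d) ℝ}
    {B : Matrix (Fin d) (Fin d) ℝ} {x : α → E d} {y : E d}
    (hA : Tendsto (fun n => opNorm (A n - B)) l (nhds 0)) (hx : Tendsto x l (nhds y)) :
    Tendsto (fun n => act (A n) (x n)) l (nhds (act B y)) := by
  have hA' : Tendsto (fun n => toEuclideanCLM (𝕜 := ℝ) (A n)) l
      (nhds (toEuclideanCLM (𝕜 := ℝ) B)) :=
    tendsto_iff_norm_sub_tendsto_zero.2 (by simp only [← map_sub]; exact hA)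
  exact (isBoundedBilinearMap_apply.continuous.tendsto _).comp (hA'.prodMk_nhds hx)

namespace SVD

variable {g L R : Matrix (Fin d) (Fin d) ℝ} {a : Fin d → ℝ}

lemma opNorm_eq (h : SVD g L a R) (hd : 0 < d) : opNorm g = a ⟨0, hd⟩ := by
  rw [opNorm_eq_norm, h.eq,
    CStarRing.norm_mul_mem_unitary _ (mem_unitary_of_mul_transpose_eq_one h.orthR),
    CStarRing.norm_mem_unitary_mul _ (mem_unitary_of_mul_transpose_eq_one h.orthL),
    l2_opNorm_diagonal]
  exact pi_norm_eq_of_forall_le (fun j => (h.pos j).le) (fun j => h.anti (Nat.zero_le j.val))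

lemma norm_act (h : SVD g L a R) (x : E d) :
    ‖act g x‖ = ‖act (diagonal a) (act R x)‖ := by
  rw [h.eq, act_mul, act_mul, norm_act_of_mul_transpose_eq_one h.orthL]

lemma abs_norm_act_div_opNorm_sub_le (h : SVD g L a R) (hd : 1 < d) (x : E d) :
    |‖act g x‖ / opNorm g - (|act R x ⟨0, Nat.zero_lt_of_lt hd⟩|)| ≤
      a ⟨1, hd⟩ / a ⟨0, Nat.zero_lt_of_lt hd⟩ * ‖x‖ := by
  set i0 : Fin d := ⟨0, Nat.zero_lt_of_lt hd⟩
  set i1 : Fin d := ⟨1, hd⟩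
  have ha0 : 0 < a i0 := h.pos i0
  have hgap : ∀ j ≠ i0, |a j| ≤ a i1 := fun j hj => by
    rw [abs_of_pos (h.pos j)]
    exact h.anti (Nat.one_le_iff_ne_zero.2 fun h0 => hj (Fin.ext h0))
  have hdiag := abs_norm_act_diagonal_sub_le (h.pos i1).le hgap (act R x)
  rw [abs_of_pos ha0, norm_act_of_mul_transpose_eq_one h.orthR] at hdiag
  rw [h.opNorm_eq i0.pos, h.norm_act, div_sub' ha0.ne', abs_div, abs_of_pos ha0,
    div_mul_eq_mul_div]
  exact div_le_div_of_nonneg_right hdiag ha0.le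

end SVD

end

/-- If `gₙ = Lₙ Δₙ Rₙ` are SVDs with `a₂(gₙ)/a₁(gₙ) → 0` and `Rₙ → R_∞` in operator norm,
and `vₙ` are unit vectors converging to a unit vector `v`, then
`‖gₙ vₙ‖/‖gₙ‖ → |⟨v, R_∞* e₁⟩|`. -/
theorem stmt_9 {d : ℕ} (hd : 2 ≤ d) (g L R : ℕ → Matrix (Fin d) (Fin d) ℝ)
    (a : ℕ → Fin d → ℝ)
    (hsvd : ∀ n, SVD (g n) (L n) (a n) (R n))
    (Rinf : Matrix (Fin d) (Fin d) ℝ)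
    (hR : Tendsto (fun n => opNorm (R n - Rinf)) atTop (nhds 0))
    (hratio : Tendsto (fun n => a n ⟨1, by omega⟩ / a n ⟨0, by omega⟩) atTop (nhds 0))
    (v : E d) (vs : ℕ → E d) (hvs : ∀ n, ‖vs n‖ = 1)
    (hconv : Tendsto vs atTop (nhds v)) :
    Tendsto (fun n => ‖act (g n) (vs n)‖ / opNorm (g n)) atTop
      (nhds |⟪v, act Rinf.transpose (stdVec ⟨0, by omega⟩)⟫|) := by
  have hcoord : Tendsto (fun n => |act (R n) (vs n) ⟨0, by omega⟩|) atTop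
      (nhds |⟪v, act Rinf.transpose (stdVec ⟨0, by omega⟩)⟫|) := by
    rw [inner_act_transpose_stdVec]
    exact (((PiLp.continuous_apply 2 _ _).tendsto _).comp (tendsto_act hR hconv)).abs
  refine hcoord.congr_dist (squeeze_zero (fun _ => dist_nonneg) (fun n => ?_) hratio)
  simpa [Real.dist_eq, abs_sub_comm, hvs n] using
    (hsvd n).abs_norm_act_div_opNorm_sub_le hd (vs n)
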